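/- arXiv:1605.03264 — 4 statements merged into one kernel-verified Lean document; each statement's English description precedes it below -/
import Mathlib

section
/- Let $R$ be a commutative ring of prime characteristic $p$, and let $\mathfrak{a}$ be an ideal generated by $u$ elements. For any ideal $J$ with $\mathfrak{a} \subseteq \sqrt{J}$, define $\nu^J_{\mathfrak{a}}(p^e) = \max\{t \in \mathbb{N} \mid \mathfrak{a}^t \not\subseteq J^{[p^e]}\}$. Then for all $e_1, e_2 \in \mathbb{N}$, $\nu^J_{\mathfrak{a}}(p^{e_1+e_2}) \leq p^{e_2}\,u + p^{e_2}\,\nu^J_{\mathfrak{a}}(p^{e_1})$; equivalently, $\frac{\nu^J_{\mathfrak{a}}(p^{e_1+e_2})}{p^{e_1+e_2}} - \frac{\nu^J_{\mathfrak{a}}(p^{e_1})}{p^{e_1}} \leq \frac{u}{p^{e_1}}$. -/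
/-!
Write `q = p ^ e₂` and `N = ν(p ^ e₁)`, so that `𝔞 ^ (N + 1) ⊆ J^[p^e₁]`. A product of
`u (q - 1) + q N + 1` generators of `𝔞` is a monomial `∏ gᵢ ^ cᵢ` with `∑ cᵢ` that large;
writing `cᵢ = q ⌊cᵢ / q⌋ + (cᵢ mod q)` with remainders at most `q - 1` forces
`∑ ⌊cᵢ / q⌋ ≥ N + 1`, so the monomial lies in `(𝔞 ^ (N + 1))^[q] ⊆ (J^[p^e₁])^[q] ⊆ J^[p^(e₁+e₂)]`,
the last inclusion because `x ↦ x ^ q` is additive in characteristic `p`.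
Hence `ν(p ^ (e₁ + e₂)) < u (q - 1) + q N + 1`.
-/

/-- The Frobenius-type power `J^{[q]}`: the ideal generated by the `q`-th powers of
elements of `J`. -/
def frobeniusPower {R : Type*} [CommSemiring R] (J : Ideal R) (q : ℕ) : Ideal R :=
  Ideal.span ((fun x => x ^ q) '' (J : Set R))

lemma frobeniusPower_mono {R : Type*} [CommSemiring R] {I J : Ideal R} (h : I ≤ J) (q : ℕ) :
    frobeniusPower I q ≤ frobeniusPower J q :=
  Ideal.span_mono (Set.image_mono h)

lemma pow_mem_frobeniusPower {R : Type*} [CommSemiring R] {J : Ideal R} {x : R}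
    (hx : x ∈ J) (q : ℕ) : x ^ q ∈ frobeniusPower J q :=
  Ideal.subset_span ⟨x, hx, rfl⟩

lemma frobeniusPower_frobeniusPower_le {R : Type*} [CommRing R] {p : ℕ} [Fact p.Prime]
    [CharP R p] (J : Ideal R) (m b : ℕ) :
    frobeniusPower (frobeniusPower J m) (p ^ b) ≤ frobeniusPower J (m * p ^ b) := by
  rw [frobeniusPower, Ideal.span_le]
  rintro _ ⟨x, hx, rfl⟩
  simp only [SetLike.mem_coe] at hx ⊢
  induction hx using Submodule.span_induction with
  | mem y hy =>
    obtain ⟨z, hz, rfl⟩ := hy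
    rw [← pow_mul]
    exact pow_mem_frobeniusPower hz _
  | zero =>
    rw [zero_pow (pow_ne_zero _ (Fact.out : p.Prime).ne_zero)]
    exact Submodule.zero_mem _
  | add y z _ _ hy hz =>
    rw [add_pow_char_pow]
    exact Submodule.add_mem _ hy hz
  | smul r y _ hy =>
    rw [smul_eq_mul, mul_pow]
    exact Ideal.mul_mem_left _ _ hy

lemma Finset.sum_le_mul_sum_div_add_card_mul {ι : Type*} (s : Finset ι) (c : ι → ℕ) {q : ℕ}
    (hq : 0 < q) : ∑ i ∈ s, c i ≤ q * ∑ i ∈ s, c i / q + s.card * (q - 1) := by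
  calc ∑ i ∈ s, c i = ∑ i ∈ s, (q * (c i / q) + c i % q) :=
        Finset.sum_congr rfl fun i _ => (Nat.div_add_mod (c i) q).symm
    _ = q * ∑ i ∈ s, c i / q + ∑ i ∈ s, c i % q := by
        rw [Finset.sum_add_distrib, Finset.mul_sum]
    _ ≤ q * ∑ i ∈ s, c i / q + ∑ _i ∈ s, (q - 1) := by
        gcongr with i
        exact Nat.le_sub_one_of_lt (Nat.mod_lt _ hq)
    _ = q * ∑ i ∈ s, c i / q + s.card * (q - 1) := by
        rw [Finset.sum_const, smul_eq_mul]

lemma Ideal.prod_pow_mem_pow_sum {R : Type*} [CommSemiring R] {I : Ideal R} {s : Finset R}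
    (hs : ∀ g ∈ s, g ∈ I) (c : R → ℕ) : ∏ g ∈ s, g ^ c g ∈ I ^ ∑ g ∈ s, c g := by
  rw [← Finset.prod_pow_eq_pow_sum]
  exact Ideal.prod_mem_prod fun g hg => Ideal.pow_mem_pow (hs g hg) _

lemma prod_pow_mem_frobeniusPower_pow {R : Type*} [CommSemiring R] {I : Ideal R}
    {s : Finset R} (hs : ∀ g ∈ s, g ∈ I) (c : R → ℕ) {q N : ℕ} (hq : 0 < q)
    (hdeg : s.card * (q - 1) + q * N + 1 ≤ ∑ g ∈ s, c g) :
    ∏ g ∈ s, g ^ c g ∈ frobeniusPower (I ^ (N + 1)) q := by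
  have hquot : N + 1 ≤ ∑ g ∈ s, c g / q := by
    have hsum := s.sum_le_mul_sum_div_add_card_mul c hq
    by_contra! h
    have := Nat.mul_le_mul_left q (Nat.lt_succ_iff.1 h)
    omega
  have hsplit : ∏ g ∈ s, g ^ c g =
      (∏ g ∈ s, g ^ (c g % q)) * (∏ g ∈ s, g ^ (c g / q)) ^ q := by
    rw [← Finset.prod_pow, ← Finset.prod_mul_distrib]
    refine Finset.prod_congr rfl fun g _ => ?_
    rw [← pow_mul, ← pow_add, mul_comm (c g / q), Nat.mod_add_div]
  rw [hsplit]
  exact Ideal.mul_mem_left _ _ <| pow_mem_frobeniusPower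
    (Ideal.pow_le_pow_right hquot (Ideal.prod_pow_mem_pow_sum hs _)) q

lemma span_pow_le_frobeniusPower {R : Type*} [CommSemiring R] (gens : Finset R)
    {q : ℕ} (hq : 0 < q) (N : ℕ) :
    Ideal.span (gens : Set R) ^ (gens.card * (q - 1) + q * N + 1)
      ≤ frobeniusPower (Ideal.span (gens : Set R) ^ (N + 1)) q := by
  classical
  rw [Ideal.span, Submodule.span_pow, Submodule.span_le]
  intro z hz
  obtain ⟨f, hf, rfl⟩ := Set.mem_pow_iff_prod.1 hz
  have himage : Finset.univ.image f ⊆ gens := Finset.image_subset_iff.2 fun i _ => hf i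
  rw [SetLike.mem_coe, Finset.prod_comp (fun x => x) f]
  refine prod_pow_mem_frobeniusPower_pow
    (fun g hg => Ideal.subset_span (himage hg)) _ hq ?_
  rw [← Finset.card_eq_sum_card_image, Finset.card_univ, Fintype.card_fin]
  gcongr

theorem stmt1_general {R : Type*} [CommRing R] (p : ℕ) (hp : p.Prime) [CharP R p]
    (𝔞 J : Ideal R) (gens : Finset R) (hgen : 𝔞 = Ideal.span (gens : Set R))
    (u : ℕ) (hu : gens.card = u)
    (ν : ℕ → ℕ)
    (hν : ∀ e : ℕ, IsGreatest {t : ℕ | ¬ 𝔞 ^ t ≤ frobeniusPower J (p ^ e)} (ν e))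
    (e₁ e₂ : ℕ) :
    ν (e₁ + e₂) ≤ p ^ e₂ * u + p ^ e₂ * ν e₁ := by
  have : Fact p.Prime := ⟨hp⟩
  set q := p ^ e₂
  have hq : 0 < q := pow_pos hp.pos e₂
  have hN : 𝔞 ^ (ν e₁ + 1) ≤ frobeniusPower J (p ^ e₁) := by
    by_contra h
    have := (hν e₁).2 h
    omega
  by_contra! hlt
  refine (hν (e₁ + e₂)).1 ?_
  have hdeg : u * (q - 1) + q * ν e₁ + 1 ≤ ν (e₁ + e₂) := by
    have : u * (q - 1) ≤ u * q := Nat.mul_le_mul_left u (Nat.sub_le q 1)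
    rw [mul_comm u q] at this
    omega
  subst hgen hu
  calc Ideal.span (gens : Set R) ^ ν (e₁ + e₂)
      ≤ Ideal.span (gens : Set R) ^ (gens.card * (q - 1) + q * ν e₁ + 1) :=
        Ideal.pow_le_pow_right hdeg
    _ ≤ frobeniusPower (Ideal.span (gens : Set R) ^ (ν e₁ + 1)) q :=
        span_pow_le_frobeniusPower gens hq _
    _ ≤ frobeniusPower (frobeniusPower J (p ^ e₁)) q := frobeniusPower_mono hN q
    _ ≤ frobeniusPower J (p ^ (e₁ + e₂)) := by
        rw [pow_add]
        exact frobeniusPower_frobeniusPower_le J _ _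

/-- If `𝔞` is generated by `u` elements and `𝔞 ⊆ √J`, then
`ν^J_𝔞(p^{e₁+e₂}) ≤ p^{e₂} u + p^{e₂} ν^J_𝔞(p^{e₁})`. -/
theorem stmt1 {R : Type*} [CommRing R] (p : ℕ) (hp : p.Prime) [CharP R p]
    (𝔞 J : Ideal R) (gens : Finset R) (hgen : 𝔞 = Ideal.span (gens : Set R))
    (u : ℕ) (hu : gens.card = u) (hrad : 𝔞 ≤ J.radical)
    (ν : ℕ → ℕ)
    (hν : ∀ e : ℕ, IsGreatest {t : ℕ | ¬ 𝔞 ^ t ≤ frobeniusPower J (p ^ e)} (ν e))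
    (e₁ e₂ : ℕ) :
    ν (e₁ + e₂) ≤ p ^ e₂ * u + p ^ e₂ * ν e₁ :=
  stmt1_general p hp 𝔞 J gens hgen u hu ν hν e₁ e₂
end

section
/- Let $R$ be a Noetherian ring of prime characteristic $p$, and let $\mathfrak{a}, J \subseteq R$ be ideals with $\mathfrak{a} \subseteq \sqrt{J}$. Then the limit $\lim_{e \to \infty} \frac{\nu^J_{\mathfrak{a}}(p^e)}{p^e}$ exists (the $F$-threshold $c^J(\mathfrak{a})$ exists). -/
/-!
If `𝔞` is generated by `μ` elements, every monomial of degree `k p + μ (p - 1) + 1` in the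
generators contains a product of `k` `p`-th powers, so
`𝔞 ^ (k p + μ (p - 1) + 1) ≤ (𝔞 ^ k)^{[p]}`.
Taking `k = ν(p^e) + 1` and using `(J^{[p^e]})^{[p]} = J^{[p^{e+1}]}` (Frobenius is additive) gives
`ν(p^{e+1}) ≤ p ν(p^e) + D` for a constant `D`. Hence `(ν(p^e) + D / (p - 1)) / p^e` is a
nonincreasing sequence of nonnegative reals; it converges, and so does `ν(p^e) / p^e`.
-/

open Filter

open Ideal

namespace frobeniusPower

variable {R : Type*} [CommRing R]

theorem mono {I J : Ideal R} (h : I ≤ J) (q : ℕ) : frobeniusPower I q ≤ frobeniusPower J q :=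
  span_mono (Set.image_mono h)

theorem pow_mem {I : Ideal R} {x : R} (hx : x ∈ I) (q : ℕ) : x ^ q ∈ frobeniusPower I q :=
  subset_span ⟨x, hx, rfl⟩

theorem eq_map_iterateFrobenius (p : ℕ) [ExpChar R p] (I : Ideal R) (e : ℕ) :
    frobeniusPower I (p ^ e) = I.map (iterateFrobenius R p e) :=
  rfl

theorem pow_le_of_pow_le (p : ℕ) [ExpChar R p] {I J : Ideal R} {k e : ℕ}
    (h : I ^ k ≤ frobeniusPower J (p ^ e)) :
    frobeniusPower I p ^ k ≤ frobeniusPower J (p ^ (e + 1)) := by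
  have hI : frobeniusPower I p = I.map (iterateFrobenius R p 1) := by
    rw [← eq_map_iterateFrobenius, pow_one]
  rw [hI, eq_map_iterateFrobenius, ← Ideal.map_pow,
    add_comm, iterateFrobenius_add, ← Ideal.map_map]
  exact map_mono (h.trans (eq_map_iterateFrobenius p J e).le)

end frobeniusPower

section Pigeonhole

variable {R : Type*} [CommRing R]

/-- Pigeonhole: a monomial of degree `m > |S| (q - 1)` in the elements of `S` has an exponent
`≥ q`. -/
theorem span_pow_le_frobeniusPower_mul (q : ℕ) (S : Finset R) {m : ℕ}
    (hm : S.card * (q - 1) < m) :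
    span (S : Set R) ^ m ≤ frobeniusPower (span (S : Set R)) q * span (S : Set R) ^ (m - q) := by
  classical
  induction S using Finset.induction_on generalizing m with
  | empty =>
    rw [Finset.coe_empty, span_empty, ← zero_eq_bot, zero_pow (by omega)]
    exact bot_le
  | @insert x T hx ih =>
    rw [Finset.card_insert_of_notMem hx, Nat.succ_mul] at hm
    set A := span ((insert x T : Finset R) : Set R)
    have hTA : span (T : Set R) ≤ A := span_mono (by simp)
    have hxA : x ∈ A := subset_span (by simp)
    have hA : A = span {x} + span (T : Set R) := by simp [A, span_insert]
    rw [hA, add_pow, sum_eq_sup, ← hA]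
    refine Finset.sup_le fun j hj => mul_le_left.trans ?_
    rw [Finset.mem_range] at hj
    rw [span_singleton_pow]
    by_cases hjq : q ≤ j
    · calc span {x ^ j} * span (T : Set R) ^ (m - j)
          ≤ (frobeniusPower A q * A ^ (j - q)) * A ^ (m - j) := by
            gcongr
            rw [span_singleton_le_iff_mem, ← pow_mul_pow_sub x hjq]
            exact mul_mem_mul (frobeniusPower.pow_mem hxA q) (pow_mem_pow hxA _)
        _ ≤ frobeniusPower A q * A ^ (m - q) := by
            rw [mul_assoc, ← pow_add]
            exact mul_mono_right (pow_le_pow_right (by omega))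
    · calc span {x ^ j} * span (T : Set R) ^ (m - j)
          ≤ A ^ j * (frobeniusPower A q * A ^ (m - j - q)) := by
            gcongr
            · rw [span_singleton_le_iff_mem]; exact pow_mem_pow hxA j
            · exact (ih (by omega)).trans (by gcongr; exact frobeniusPower.mono hTA q)
        _ ≤ frobeniusPower A q * A ^ (m - q) := by
            rw [mul_left_comm, ← pow_add]
            exact mul_mono_right (pow_le_pow_right (by omega))

theorem span_pow_le_frobeniusPower_pow_mul (q : ℕ) (S : Finset R) (k : ℕ) {m : ℕ}
    (hm : S.card * (q - 1) < m) :
    span (S : Set R) ^ (k * q + m) ≤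
      frobeniusPower (span (S : Set R)) q ^ k * span (S : Set R) ^ m := by
  induction k with
  | zero => simp
  | succ k ih =>
    calc span (S : Set R) ^ ((k + 1) * q + m)
        ≤ frobeniusPower (span (S : Set R)) q * span (S : Set R) ^ (k * q + m) := by
          have hsub : (k + 1) * q + m - q = k * q + m := by rw [add_mul, one_mul]; omega
          simpa only [hsub] using span_pow_le_frobeniusPower_mul q S
            (m := (k + 1) * q + m) (by omega)
      _ ≤ frobeniusPower (span (S : Set R)) q ^ (k + 1) * span (S : Set R) ^ m := by
          rw [pow_succ', mul_assoc]; exact mul_mono_right ih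

theorem span_pow_le_frobeniusPower_succ (p : ℕ) [ExpChar R p] (S : Finset R) {J : Ideal R}
    {k e : ℕ} (h : span (S : Set R) ^ k ≤ frobeniusPower J (p ^ e)) :
    span (S : Set R) ^ (k * p + (S.card * (p - 1) + 1)) ≤ frobeniusPower J (p ^ (e + 1)) :=
  (span_pow_le_frobeniusPower_pow_mul p S k (Nat.lt_succ_self _)).trans
    (mul_le_left.trans (frobeniusPower.pow_le_of_pow_le p h))

end Pigeonhole

theorem exists_tendsto_div_pow_of_le_mul_add {u : ℕ → ℝ} {c D : ℝ} (hc : 1 < c)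
    (hu : ∀ n, 0 ≤ u n) (h : ∀ n, u (n + 1) ≤ c * u n + D) :
    ∃ L, Tendsto (fun n => u n / c ^ n) atTop (nhds L) := by
  have hc0 : 0 < c := by linarith
  set K := D / (c - 1)
  -- `-K` is the fixed point of `x ↦ c x + D`, so `u n + K` grows at most by the factor `c`.
  set a : ℕ → ℝ := fun n => (u n + K) / c ^ n
  have hK : Tendsto (fun n => K / c ^ n) atTop (nhds 0) :=
    tendsto_const_nhds.div_atTop (tendsto_pow_atTop_atTop_of_one_lt hc)
  have ha_anti : Antitone a := by
    refine antitone_nat_of_succ_le fun n => ?_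
    have hKD : (c - 1) * K = D := mul_div_cancel₀ D (by linarith)
    calc a (n + 1) ≤ (c * u n + D + K) / c ^ (n + 1) := by simp only [a]; gcongr; exact h n
      _ = a n := by
        simp only [a]
        rw [pow_succ', ← div_div, show c * u n + D + K = c * (u n + K) by linarith,
          mul_div_cancel_left₀ _ hc0.ne']
  have ha_bdd : BddBelow (Set.range a) := by
    refine ⟨-|K|, ?_⟩
    rintro _ ⟨n, rfl⟩
    have : |K / c ^ n| ≤ |K| := by
      rw [abs_div, abs_of_pos (pow_pos hc0 n)]
      exact div_le_self (abs_nonneg K) (one_le_pow₀ hc.le)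
    calc -|K| ≤ K / c ^ n := (neg_le_neg this).trans (neg_abs_le _)
      _ ≤ a n := by simp only [a]; gcongr; linarith [hu n]
  refine ⟨⨅ n, a n, ?_⟩
  convert (tendsto_atTop_ciInf ha_anti ha_bdd).sub hK using 1
  · ext n; simp only [a]; ring
  · rw [sub_zero]

theorem stmt2_general {R : Type*} [CommRing R] [IsNoetherianRing R]
    (p : ℕ) (hp : p.Prime) [CharP R p]
    (𝔞 J : Ideal R)
    (ν : ℕ → ℕ)
    (hν : ∀ e : ℕ, IsGreatest {t : ℕ | ¬ 𝔞 ^ t ≤ frobeniusPower J (p ^ e)} (ν e)) :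
    ∃ L : ℝ, Tendsto (fun e : ℕ => (ν e : ℝ) / (p : ℝ) ^ e) atTop (nhds L) := by
  have := Fact.mk hp
  obtain ⟨S, rfl⟩ := (IsNoetherian.noetherian 𝔞 : 𝔞.FG)
  have hν_succ : ∀ e, ν (e + 1) ≤ p * ν e + (p + S.card * (p - 1)) := by
    intro e
    have hle : span (S : Set R) ^ (ν e + 1) ≤ frobeniusPower J (p ^ e) :=
      not_not.1 fun h => ((hν e).2 h).not_gt (Nat.lt_add_one _)
    by_contra! hlt
    refine (hν (e + 1)).1 ((pow_le_pow_right ?_).trans (span_pow_le_frobeniusPower_succ p S hle))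
    rw [add_one_mul, mul_comm (ν e)]
    omega
  exact exists_tendsto_div_pow_of_le_mul_add (D := (p + S.card * (p - 1) : ℕ))
    (by exact_mod_cast hp.one_lt) (fun e => Nat.cast_nonneg _)
    fun e => by exact_mod_cast hν_succ e

/-- Existence of the `F`-threshold `c^J(𝔞)`: for a Noetherian ring `R` of prime
characteristic `p` and ideals `𝔞 ⊆ √J`, the limit of `ν^J_𝔞(p^e)/p^e` exists. -/
theorem stmt2 {R : Type*} [CommRing R] [IsNoetherianRing R]
    (p : ℕ) (hp : p.Prime) [CharP R p]
    (𝔞 J : Ideal R) (hrad : 𝔞 ≤ J.radical)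
    (ν : ℕ → ℕ)
    (hν : ∀ e : ℕ, IsGreatest {t : ℕ | ¬ 𝔞 ^ t ≤ frobeniusPower J (p ^ e)} (ν e)) :
    ∃ L : ℝ, Tendsto (fun e : ℕ => (ν e : ℝ) / (p : ℝ) ^ e) atTop (nhds L) :=
  stmt2_general p hp 𝔞 J ν hν
end

section
/- Let $(a_e)_{e \in \mathbb{N}}$ be a sequence of nonnegative real numbers and $C \geq 0$ a constant such that for all $e_1, e_2 \in \mathbb{N}$, $a_{e_1+e_2} \leq a_{e_1} + \frac{C}{p^{e_1}}$ for a fixed real $p > 1$. Then $\limsup_{e \to \infty} a_e \leq \liminf_{e \to \infty} a_e$, so $\lim_{e \to \infty} a_e$ exists. -/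
open Filter

/-- Abstract convergence principle: a sequence `(a_e)` of nonnegative reals satisfying
`a_{e₁+e₂} ≤ a_{e₁} + C/p^{e₁}` for all `e₁, e₂` (with `C ≥ 0`, `p > 1`) converges. -/
theorem stmt3 (p C : ℝ) (hp : 1 < p) (hC : 0 ≤ C)
    (a : ℕ → ℝ) (ha : ∀ e, 0 ≤ a e)
    (hsub : ∀ e₁ e₂ : ℕ, a (e₁ + e₂) ≤ a e₁ + C / p ^ e₁) :
    ∃ L : ℝ, Tendsto a atTop (nhds L) := by
  have hp0 : (0:ℝ) < p := lt_trans one_pos hp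
  have hbound : ∀ n, a n ≤ a 0 + C := by
    intro n
    have := hsub 0 n
    simpa using this
  have hba : IsBoundedUnder (· ≤ ·) atTop a := isBoundedUnder_of ⟨a 0 + C, hbound⟩
  have hbb : IsBoundedUnder (· ≥ ·) atTop a := isBoundedUnder_of ⟨0, ha⟩
  set L := liminf a atTop with hL
  have hcb : IsCoboundedUnder (· ≤ ·) atTop a := hbb.isCoboundedUnder_le
  have hkey : ∀ e, limsup a atTop ≤ a e + C / p ^ e := by
    intro e
    apply limsup_le_of_le hcb
    filter_upwards [eventually_ge_atTop e] with n hn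
    obtain ⟨k, rfl⟩ := Nat.exists_eq_add_of_le hn
    exact hsub e k
  have htend : Tendsto (fun e : ℕ => C / p ^ e) atTop (nhds 0) := by
    have := tendsto_pow_atTop_nhds_zero_of_lt_one (le_of_lt (by positivity : (0:ℝ) < 1/p))
      (by rw [div_lt_one hp0]; exact hp)
    have h2 := this.const_mul C
    simpa [div_eq_mul_inv, mul_comm, ← inv_pow] using h2
  have hls : limsup a atTop ≤ L := by
    refine le_of_forall_pos_le_add ?_
    intro ε hε
    have h1 : ∃ᶠ e in atTop, a e < L + ε / 2 :=
      frequently_lt_of_liminf_lt hba.isCoboundedUnder_ge (by linarith)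
    have h2 : ∀ᶠ e in atTop, C / p ^ e < ε / 2 :=
      (htend.eventually (gt_mem_nhds (by linarith : (0:ℝ) < ε / 2)))
    obtain ⟨e, he1, he2⟩ := (h1.and_eventually h2).exists
    calc limsup a atTop ≤ a e + C / p ^ e := hkey e
      _ ≤ L + ε := by linarith
  refine ⟨L, tendsto_of_liminf_eq_limsup rfl ?_ hba hbb⟩
  exact le_antisymm hls (liminf_le_limsup hba hbb)
end

section
/- Let $S = K[x_1, \ldots, x_n]$ be a polynomial ring over a field of characteristic $p$, let $b \mid p - 1$, $\kappa = (p-1)/b$, $n \geq b$, and $f = x_1^b + \cdots + x_n^b$. Then $f^{p-1} \notin (x_1^p, \ldots, x_n^p)$. -/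
open MvPolynomial

private lemma prod_X_pow_aux {σ K : Type*} [CommSemiring K] (s : Finset σ) (e : σ → ℕ) :
    ∏ i ∈ s, (X i : MvPolynomial σ K) ^ e i =
      monomial (∑ i ∈ s, Finsupp.single i (e i)) 1 := by
  classical
  induction s using Finset.cons_induction with
  | empty => simp
  | cons a s ha ih =>
      rw [Finset.prod_cons, Finset.sum_cons, ih, X_pow_eq_monomial, monomial_mul, one_mul]

/-- Let `S = K[x₁, …, xₙ]` with `char K = p` prime, `b ∣ p - 1`, `n ≥ b ≥ 1`, and
`f = x₁ᵇ + ⋯ + xₙᵇ`.  Then `f^{p-1} ∉ (x₁ᵖ, …, xₙᵖ)`. -/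
theorem stmt18 {K : Type*} [Field K] (p : ℕ) (hp : p.Prime) [CharP K p]
    (b n : ℕ) (hb : 1 ≤ b) (hdvd : b ∣ p - 1) (hn : b ≤ n) :
    ((∑ i : Fin n, (X i : MvPolynomial (Fin n) K) ^ b) ^ (p - 1)) ∉
      Ideal.span (Set.range fun i : Fin n => (X i : MvPolynomial (Fin n) K) ^ p) := by
  classical
  set κ := (p - 1) / b with hκ
  have hbκ : b * κ = p - 1 := Nat.mul_div_cancel' hdvd
  have hp2 : 2 ≤ p := hp.two_le
  set k₀ : Fin n → ℕ := fun i => if (i : ℕ) < b then κ else 0 with hk₀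
  have hk₀le : ∀ i, k₀ i ≤ κ := by
    intro i; by_cases h : (i : ℕ) < b <;> simp [hk₀, h]
  have hsum : ∑ i : Fin n, k₀ i = p - 1 := by
    rw [Fin.sum_univ_eq_sum_range (fun j => if j < b then κ else 0) n,
      ← Finset.sum_subset (Finset.range_subset_range.2 hn)
        (fun i _ hi => if_neg (by simpa using hi))]
    rw [Finset.sum_congr rfl fun i hi => if_pos (Finset.mem_range.1 hi),
      Finset.sum_const, Finset.card_range, smul_eq_mul, hbκ]
  set d : Fin n →₀ ℕ := ∑ i : Fin n, Finsupp.single i (b * k₀ i) with hd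
  have hd_apply : ∀ j, d j = b * k₀ j := by
    intro j
    rw [hd, Finsupp.finset_sum_apply]
    simp [Finsupp.single_apply]
  have hk₀mem : k₀ ∈ Finset.piAntidiag Finset.univ (p - 1) := by
    rw [Finset.mem_piAntidiag]
    exact ⟨hsum, fun i _ => Finset.mem_univ i⟩
  have hcoeff : coeff d ((∑ i : Fin n, (X i : MvPolynomial (Fin n) K) ^ b) ^ (p - 1)) =
      (Nat.multinomial Finset.univ k₀ : K) := by
    rw [Finset.sum_pow_eq_sum_piAntidiag, coeff_sum]
    have hterm : ∀ k : Fin n → ℕ,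
        coeff d ((Nat.multinomial Finset.univ k : MvPolynomial (Fin n) K) *
          ∏ i : Fin n, ((X i : MvPolynomial (Fin n) K) ^ b) ^ k i) =
        (if (∑ i : Fin n, Finsupp.single i (b * k i)) = d
          then (Nat.multinomial Finset.univ k : K) else 0) := by
      intro k
      simp_rw [← pow_mul]
      rw [prod_X_pow_aux, ← nsmul_eq_mul, smul_monomial, coeff_monomial]
      split <;> simp
    rw [Finset.sum_congr rfl fun k _ => hterm k]
    rw [Finset.sum_eq_single_of_mem k₀ hk₀mem]
    · rw [if_pos hd.symm]
    · intro k _ hk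
      rw [if_neg]
      intro hkd
      apply hk
      funext j
      have := congrArg (fun g : Fin n →₀ ℕ => g j) (hkd.trans rfl)
      simp only [Finsupp.finset_sum_apply, Finsupp.single_apply] at this
      rw [Finset.sum_ite_eq' Finset.univ j (fun i => b * k i)] at this
      simp only [Finset.mem_univ, if_true] at this
      have h2 := hd_apply j
      exact Nat.eq_of_mul_eq_mul_left (by omega) (this.trans h2)
  have hmulK : (Nat.multinomial Finset.univ k₀ : K) ≠ 0 := by
    rw [Ne, CharP.cast_eq_zero_iff K p]
    intro hpd
    have hspec := Nat.multinomial_spec Finset.univ k₀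
    rw [hsum] at hspec
    have : p ∣ Nat.factorial (p - 1) := by
      rw [← hspec]; exact Dvd.dvd.mul_left hpd _
    rw [hp.dvd_factorial] at this
    omega
  intro hmem
  have hrange : (Set.range fun i : Fin n => (X i : MvPolynomial (Fin n) K) ^ p)
      = (fun s => monomial s (1 : K)) '' (Set.range fun i : Fin n => Finsupp.single i p) := by
    rw [← Set.range_comp]
    simp [Function.comp_def, X_pow_eq_monomial]
  rw [hrange, mem_ideal_span_monomial_image] at hmem
  obtain ⟨si, ⟨i, rfl⟩, hle⟩ := hmem d (by rw [mem_support_iff, hcoeff]; exact hmulK)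
  rw [Finsupp.single_le_iff, hd_apply] at hle
  have : b * k₀ i ≤ b * κ := Nat.mul_le_mul_left b (hk₀le i)
  omega
end
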